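/- arXiv:2602.11336 — 4 statements merged into one kernel-verified Lean document; each statement's English description precedes it below -/
import Mathlib

section
/- Let x_0, …, x_n : [0,T] → ℝ be C¹ functions with x_n'(t) = v_max and, for 0 ≤ i < n, x_i'(t) = v(α_i L / (N (x_{i+1}(t) − x_i(t)))), where v is continuous, decreasing, v(0) = v_max, and x_{i+1}(t) > x_i(t) for all t. Then for each i and each t ∈ [0,T], x_{i+1}(t) − x_i(t) ≤ (x_n(0) − x_0(0)) + (v_max − v(M))·t, where M = max_i (α_i L / (N (x_{i+1}(0) − x_i(0)))). -/
/-- If `f 0 ≥ c` and the derivative of `f` is nonnegative whenever `f ≤ c`,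
then `f ≥ c` on `[0, T]`. -/
lemma barrier_aux {T c : ℝ} {f f' : ℝ → ℝ}
    (hd : ∀ t ∈ Set.Icc (0:ℝ) T, HasDerivAt f (f' t) t)
    (hpos : ∀ t ∈ Set.Icc (0:ℝ) T, f t ≤ c → 0 ≤ f' t)
    (h0 : c ≤ f 0) : ∀ t ∈ Set.Icc (0:ℝ) T, c ≤ f t := by
  intro t1 ht1
  by_contra hlt
  push_neg at hlt
  have hcont : ∀ t ∈ Set.Icc (0:ℝ) T, ContinuousAt f t := fun t ht => (hd t ht).continuousAt
  have hsub : Set.Icc (0:ℝ) t1 ⊆ Set.Icc 0 T := Set.Icc_subset_Icc le_rfl ht1.2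
  set S := Set.Icc (0:ℝ) t1 ∩ f ⁻¹' Set.Ici c with hSdef
  have hScl : IsClosed S := by
    apply ContinuousOn.preimage_isClosed_of_isClosed
    · exact fun t ht => (hcont t (hsub ht)).continuousWithinAt
    · exact isClosed_Icc
    · exact isClosed_Ici
  have hScomp : IsCompact S :=
    (isCompact_Icc (a := (0:ℝ)) (b := t1)).of_isClosed_subset hScl
      (fun t ht => ht.1)
  have h0S : (0:ℝ) ∈ S := ⟨⟨le_rfl, ht1.1⟩, h0⟩
  have hne : S.Nonempty := ⟨0, h0S⟩
  set t0 := sSup S with ht0def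
  have ht0S : t0 ∈ S := hScomp.sSup_mem hne
  have ht0le : t0 ≤ t1 := ht0S.1.2
  have ht0lt : t0 < t1 := by
    rcases lt_or_eq_of_le ht0le with h | h
    · exact h
    · exact absurd (h ▸ ht0S.2) (not_le.mpr hlt)
  have hlt' : ∀ s ∈ Set.Ioc t0 t1, f s < c := by
    intro s hs
    by_contra h
    push_neg at h
    have hsS : s ∈ S := ⟨⟨le_trans ht0S.1.1 hs.1.le, hs.2⟩, h⟩
    exact absurd (le_csSup hScomp.bddAbove hsS) (not_le.mpr hs.1)
  have hmem : ∀ s ∈ Set.Icc t0 t1, s ∈ Set.Icc (0:ℝ) T := fun s hs =>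
    hsub ⟨le_trans ht0S.1.1 hs.1, hs.2⟩
  have hmono : MonotoneOn f (Set.Icc t0 t1) := by
    apply monotoneOn_of_deriv_nonneg (convex_Icc t0 t1)
    · exact fun s hs => (hcont s (hmem s hs)).continuousWithinAt
    · intro s hs
      rw [interior_Icc] at hs
      exact (hd s (hmem s ⟨hs.1.le, hs.2.le⟩)).differentiableAt.differentiableWithinAt
    · intro s hs
      rw [interior_Icc] at hs
      have hsm : s ∈ Set.Icc (0:ℝ) T := hmem s ⟨hs.1.le, hs.2.le⟩
      rw [(hd s hsm).deriv]
      exact hpos s hsm (hlt' s ⟨hs.1, hs.2.le⟩).le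
  have hle := hmono (Set.left_mem_Icc.mpr ht0le) (Set.right_mem_Icc.mpr ht0le) ht0le
  exact absurd (le_trans ht0S.2 hle) (not_le.mpr hlt)

/-- If the derivative of `g` is nonpositive on `[0,T]`, then `g t ≤ g 0` there. -/
lemma decay_aux {T : ℝ} {g g' : ℝ → ℝ}
    (hd : ∀ t ∈ Set.Icc (0:ℝ) T, HasDerivAt g (g' t) t)
    (hle : ∀ t ∈ Set.Icc (0:ℝ) T, g' t ≤ 0) :
    ∀ t ∈ Set.Icc (0:ℝ) T, g t ≤ g 0 := by
  intro t ht
  have h0T : (0:ℝ) ∈ Set.Icc (0:ℝ) T := ⟨le_rfl, ht.1.trans ht.2⟩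
  have hanti : AntitoneOn g (Set.Icc 0 T) := by
    apply antitoneOn_of_deriv_nonpos (convex_Icc 0 T)
    · exact fun s hs => (hd s hs).continuousAt.continuousWithinAt
    · intro s hs
      rw [interior_Icc] at hs
      exact (hd s ⟨hs.1.le, hs.2.le⟩).differentiableAt.differentiableWithinAt
    · intro s hs
      rw [interior_Icc] at hs
      rw [(hd s ⟨hs.1.le, hs.2.le⟩).deriv]
      exact hle s ⟨hs.1.le, hs.2.le⟩
  exact hanti h0T ht ht.1

/-- Discrete maximum principle, upper bound on the gaps for the
parametrized Follow-the-Leader system. -/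
theorem stmt3 (n N : ℕ) (hn : 0 < n) (hN : 0 < N) (L T vmax M : ℝ)
    (hL : 0 < L) (hT : 0 < T)
    (α : ℕ → ℝ) (hα : ∀ i < n, 1 ≤ α i)
    (v : ℝ → ℝ) (hC1 : ContDiffOn ℝ 1 v (Set.Ici 0))
    (hmono : AntitoneOn v (Set.Ici 0)) (hv0 : v 0 = vmax)
    (x : ℕ → ℝ → ℝ)
    (hgap : ∀ i < n, ∀ t ∈ Set.Icc 0 T, x i t < x (i + 1) t)
    (hlead : ∀ t ∈ Set.Icc 0 T, HasDerivAt (x n) vmax t)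
    (hfol : ∀ i < n, ∀ t ∈ Set.Icc 0 T,
      HasDerivAt (x i) (v (α i * L / (N * (x (i + 1) t - x i t)))) t)
    (hM : IsGreatest {r : ℝ | ∃ i < n, r = α i * L / (N * (x (i + 1) 0 - x i 0))} M) :
    ∀ i < n, ∀ t ∈ Set.Icc 0 T,
      x (i + 1) t - x i t ≤ (x n 0 - x 0 0) + (vmax - v M) * t := by
  have h0T : (0:ℝ) ∈ Set.Icc (0:ℝ) T := ⟨le_rfl, hT.le⟩
  have hNpos : (0:ℝ) < (N:ℝ) := by exact_mod_cast hN
  have gap_pos : ∀ i < n, ∀ t ∈ Set.Icc (0:ℝ) T, 0 < x (i+1) t - x i t :=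
    fun i hi t ht => sub_pos.mpr (hgap i hi t ht)
  have apos : ∀ i < n, 0 < α i * L :=
    fun i hi => mul_pos (lt_of_lt_of_le one_pos (hα i hi)) hL
  have rho_pos : ∀ i < n, ∀ t ∈ Set.Icc (0:ℝ) T,
      0 < α i * L / (N * (x (i+1) t - x i t)) :=
    fun i hi t ht => div_pos (apos i hi) (mul_pos hNpos (gap_pos i hi t ht))
  have hMpos : 0 < M := by
    obtain ⟨j, hj, hEq⟩ := hM.1
    rw [hEq]; exact rho_pos j hj 0 h0T
  -- bridges between gap bounds and density bounds
  have bridge1 : ∀ {a g : ℝ}, 0 < a → 0 < g →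
      (a / (N * M) ≤ g ↔ a / (N * g) ≤ M) := by
    intro a g _ hg
    rw [div_le_iff₀ (mul_pos hNpos hMpos), div_le_iff₀ (mul_pos hNpos hg)]
    constructor <;> intro h <;> nlinarith
  have bridge2 : ∀ {a g : ℝ}, 0 < a → 0 < g →
      (g ≤ a / (N * M) ↔ M ≤ a / (N * g)) := by
    intro a g _ hg
    rw [le_div_iff₀ (mul_pos hNpos hMpos), le_div_iff₀ (mul_pos hNpos hg)]
    constructor <;> intro h <;> nlinarith
  have vle : ∀ r : ℝ, 0 ≤ r → v r ≤ vmax := by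
    intro r hr
    have := hmono (Set.self_mem_Ici) (Set.mem_Ici.mpr hr) hr
    rwa [hv0] at this
  have hMmem : M ∈ Set.Ici (0:ℝ) := Set.mem_Ici.mpr hMpos.le
  -- the discrete maximum principle on densities, by downward induction
  have dens : ∀ j : ℕ, ∀ i : ℕ, n = i + j + 1 →
      ∀ t ∈ Set.Icc (0:ℝ) T, α i * L / (N * M) ≤ x (i+1) t - x i t := by
    intro j
    induction j with
    | zero =>
      intro i hni
      have hi : i < n := by omega
      have hi1 : i + 1 = n := by omega
      apply barrier_aux
        (f' := fun t => vmax - v (α i * L / (N * (x (i+1) t - x i t))))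
      · intro t ht
        have hder := (hlead t ht).sub (hfol i hi t ht)
        rw [← hi1] at hder
        exact hder
      · intro t ht _
        exact sub_nonneg.mpr (vle _ (rho_pos i hi t ht).le)
      · exact (bridge1 (apos i hi) (gap_pos i hi 0 h0T)).mpr (hM.2 ⟨i, hi, rfl⟩)
    | succ j ih =>
      intro i hni
      have hi : i < n := by omega
      have hi1 : i + 1 < n := by omega
      have IH := ih (i+1) (by omega)
      apply barrier_aux
        (f' := fun t => v (α (i+1) * L / (N * (x (i+2) t - x (i+1) t)))
          - v (α i * L / (N * (x (i+1) t - x i t))))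
      · intro t ht
        exact (hfol (i+1) hi1 t ht).sub (hfol i hi t ht)
      · intro t ht hfc
        have h1 : M ≤ α i * L / (N * (x (i+1) t - x i t)) :=
          (bridge2 (apos i hi) (gap_pos i hi t ht)).mp hfc
        have h2 : α (i+1) * L / (N * (x (i+2) t - x (i+1) t)) ≤ M :=
          (bridge1 (apos (i+1) hi1) (gap_pos (i+1) hi1 t ht)).mp (IH t ht)
        have hv1 := hmono hMmem (Set.mem_Ici.mpr (hMpos.le.trans h1)) h1
        have hv2 := hmono (Set.mem_Ici.mpr (rho_pos (i+1) hi1 t ht).le) hMmem h2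
        simp only [sub_nonneg]
        exact le_trans hv1 hv2
      · exact (bridge1 (apos i hi) (gap_pos i hi 0 h0T)).mpr (hM.2 ⟨i, hi, rfl⟩)
  -- monotonicity of positions at time 0
  have mono0 : ∀ b ≤ n, ∀ a ≤ b, x a 0 ≤ x b 0 := by
    intro b
    induction b with
    | zero => intro _ a ha; have : a = 0 := by omega
              rw [this]
    | succ b ihb =>
      intro hb a ha
      rcases Nat.lt_or_ge a (b+1) with h | h
      · have h1 : a ≤ b := by omega
        exact (ihb (by omega) a h1).trans (hgap b (by omega) 0 h0T).le
      · have : a = b + 1 := by omega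
        rw [this]
  -- main estimate
  intro i hi t ht
  have hvM : ∀ s ∈ Set.Icc (0:ℝ) T,
      v M ≤ v (α i * L / (N * (x (i+1) s - x i s))) := by
    intro s hs
    have hd := dens (n - i - 1) i (by omega) s hs
    have hρ := (bridge1 (apos i hi) (gap_pos i hi s hs)).mp hd
    exact hmono (Set.mem_Ici.mpr (rho_pos i hi s hs).le) hMmem hρ
  obtain ⟨w, hw, hwle⟩ : ∃ w : ℝ → ℝ,
      (∀ s ∈ Set.Icc (0:ℝ) T, HasDerivAt (x (i+1)) (w s) s) ∧
      (∀ s ∈ Set.Icc (0:ℝ) T, w s ≤ vmax) := by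
    rcases Nat.lt_or_ge (i+1) n with h | h
    · exact ⟨fun s => v (α (i+1) * L / (N * (x (i+2) s - x (i+1) s))),
        fun s hs => hfol (i+1) h s hs,
        fun s hs => vle _ (rho_pos (i+1) h s hs).le⟩
    · have hin : i + 1 = n := by omega
      refine ⟨fun _ => vmax, fun s hs => ?_, fun _ _ => le_rfl⟩
      rw [hin]; exact hlead s hs
  have key := decay_aux
    (g := fun s => (x (i+1) s - x i s) - (vmax - v M) * s)
    (g' := fun s => (w s - v (α i * L / (N * (x (i+1) s - x i s)))) - (vmax - v M))
    (fun s hs => by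
      have h1 := ((hw s hs).sub (hfol i hi s hs)).sub
        ((hasDerivAt_id s).const_mul (vmax - v M))
      rw [mul_one] at h1
      exact h1)
    (fun s hs => by
      have h1 := hwle s hs
      have h2 := hvM s hs
      linarith)
    t ht
  simp only [mul_zero, sub_zero] at key
  have hgap0 : x (i+1) 0 - x i 0 ≤ x n 0 - x 0 0 := by
    have h1 := mono0 i hi.le 0 (Nat.zero_le i)
    have h2 := mono0 n le_rfl (i+1) hi
    linarith
  linarith
end

section
/- Under the hypotheses of the parametrized FtL system (v ∈ C¹ decreasing with v(0)=v_max, α_i ≥ 1, strictly ordered initial positions), for each i = 0,…,n−1 and all t ∈ [0,T], x_{i+1}(t) − x_i(t) ≥ α_i L / (N·M), where M = max_j (α_j L / (N (x_{j+1}(0) − x_j(0)))). Equivalently, the discrete density ρ_i(t) = α_i L / (N (x_{i+1}(t) − x_i(t))) satisfies ρ_i(t) ≤ M. -/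
open Set

/-- Algebraic equivalence between the gap lower bound and the density upper bound. -/
lemma div_iff_aux {c g m Nr : ℝ} (hc : 0 < c) (hg : 0 < g) (hm : 0 < m) (hN : 0 < Nr) :
    c / (Nr * m) ≤ g ↔ c / (Nr * g) ≤ m := by
  rw [div_le_iff₀ (by positivity), div_le_iff₀ (by positivity)]
  constructor <;> intro h <;> nlinarith

lemma div_iff_aux' {c g m Nr : ℝ} (hc : 0 < c) (hg : 0 < g) (hm : 0 < m) (hN : 0 < Nr) :
    g ≤ c / (Nr * m) ↔ m ≤ c / (Nr * g) := by
  rw [le_div_iff₀ (by positivity), le_div_iff₀ (by positivity)]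
  constructor <;> intro h <;> nlinarith

/-- Invariance: if `f a ≥ c` and the derivative of `f` is nonnegative wherever `f ≤ c`,
then `f ≥ c` on the whole interval. -/
lemma inv_aux {f f' : ℝ → ℝ} {a b c : ℝ}
    (hd : ∀ t ∈ Icc a b, HasDerivAt f (f' t) t)
    (h0 : c ≤ f a)
    (hpos : ∀ t ∈ Icc a b, f t ≤ c → 0 ≤ f' t) :
    ∀ t ∈ Icc a b, c ≤ f t := by
  intro t₁ ht₁
  by_contra hlt
  push_neg at hlt
  have hcont : ContinuousOn f (Icc a b) := fun t ht =>
    (hd t ht).continuousAt.continuousWithinAt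
  set S : Set ℝ := Icc a t₁ ∩ f ⁻¹' (Ici c) with hS
  have hsub : Icc a t₁ ⊆ Icc a b := Icc_subset_Icc le_rfl ht₁.2
  have hSclosed : IsClosed S :=
    (hcont.mono hsub).preimage_isClosed_of_isClosed isClosed_Icc isClosed_Ici
  have hScpt : IsCompact S :=
    IsCompact.of_isClosed_subset isCompact_Icc hSclosed inter_subset_left
  have haS : a ∈ S := ⟨⟨le_rfl, ht₁.1⟩, h0⟩
  have hsmem : sSup S ∈ S := hScpt.sSup_mem ⟨a, haS⟩
  obtain ⟨s, hseq⟩ : ∃ s, s = sSup S := ⟨_, rfl⟩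
  rw [← hseq] at hsmem
  have hs_le : s ≤ t₁ := hsmem.1.2
  have hcs : c ≤ f s := hsmem.2
  have hst : s < t₁ := lt_of_le_of_ne hs_le (by
    rintro rfl; exact absurd hcs (not_le.2 hlt))
  have hIsub : Icc s t₁ ⊆ Icc a b := fun u hu =>
    ⟨hsmem.1.1.trans hu.1, hu.2.trans ht₁.2⟩
  have hlt' : ∀ u ∈ Ioc s t₁, f u < c := by
    intro u hu
    by_contra h
    push_neg at h
    have hu' : u ∈ S := ⟨⟨hsmem.1.1.trans hu.1.le, hu.2⟩, h⟩
    have := le_csSup hScpt.bddAbove hu'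
    rw [← hseq] at this
    exact absurd this (not_le.2 hu.1)
  have hmono : MonotoneOn f (Icc s t₁) := by
    apply monotoneOn_of_deriv_nonneg (convex_Icc s t₁) (hcont.mono hIsub)
    · intro u hu
      rw [interior_Icc] at hu
      exact ((hd u (hIsub ⟨hu.1.le, hu.2.le⟩)).differentiableAt).differentiableWithinAt
    · intro u hu
      rw [interior_Icc] at hu
      have hub : u ∈ Icc a b := hIsub ⟨hu.1.le, hu.2.le⟩
      rw [(hd u hub).deriv]
      exact hpos u hub (le_of_lt (hlt' u ⟨hu.1, hu.2.le⟩))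
  have := hmono ⟨le_rfl, hst.le⟩ ⟨hst.le, le_rfl⟩ hst.le
  linarith

/-- Discrete maximum principle, lower bound on the gaps, equivalently
the discrete density never exceeds its initial maximum `M`. -/
theorem stmt4 (n N : ℕ) (hn : 0 < n) (hN : 0 < N) (L T vmax M : ℝ)
    (hL : 0 < L) (hT : 0 < T)
    (α : ℕ → ℝ) (hα : ∀ i < n, 1 ≤ α i)
    (v : ℝ → ℝ) (hC1 : ContDiffOn ℝ 1 v (Set.Ici 0))
    (hmono : AntitoneOn v (Set.Ici 0)) (hv0 : v 0 = vmax)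
    (x : ℕ → ℝ → ℝ)
    (hgap : ∀ i < n, ∀ t ∈ Set.Icc 0 T, x i t < x (i + 1) t)
    (hlead : ∀ t ∈ Set.Icc 0 T, HasDerivAt (x n) vmax t)
    (hfol : ∀ i < n, ∀ t ∈ Set.Icc 0 T,
      HasDerivAt (x i) (v (α i * L / (N * (x (i + 1) t - x i t)))) t)
    (hM : IsGreatest {r : ℝ | ∃ i < n, r = α i * L / (N * (x (i + 1) 0 - x i 0))} M) :
    ∀ i < n, ∀ t ∈ Set.Icc 0 T,
      α i * L / (N * M) ≤ x (i + 1) t - x i t ∧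
      α i * L / (N * (x (i + 1) t - x i t)) ≤ M := by
  have hNr : (0:ℝ) < (N:ℝ) := by exact_mod_cast hN
  have h0T : (0:ℝ) ∈ Icc (0:ℝ) T := ⟨le_rfl, hT.le⟩
  -- positive constants
  have hc : ∀ i < n, 0 < α i * L := fun i hi => by
    have := hα i hi; nlinarith
  have hgap' : ∀ i < n, ∀ t ∈ Icc (0:ℝ) T, 0 < x (i+1) t - x i t := fun i hi t ht =>
    sub_pos.2 (hgap i hi t ht)
  have hMpos : 0 < M := by
    obtain ⟨i, hi, hMe⟩ := hM.1
    rw [hMe]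
    exact div_pos (hc i hi) (mul_pos hNr (hgap' i hi 0 h0T))
  -- initial bound: gaps at time 0 are at least the threshold
  have hinit : ∀ i < n, α i * L / (N * M) ≤ x (i+1) 0 - x i 0 := by
    intro i hi
    have hρ : α i * L / (N * (x (i+1) 0 - x i 0)) ≤ M := hM.2 ⟨i, hi, rfl⟩
    exact (div_iff_aux (hc i hi) (hgap' i hi 0 h0T) hMpos hNr).2 hρ
  -- main claim by downward induction
  have key : ∀ d : ℕ, ∀ i, i < n → n ≤ i + 1 + d →
      ∀ t ∈ Icc (0:ℝ) T, α i * L / (N * M) ≤ x (i+1) t - x i t := by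
    intro d
    induction d with
    | zero =>
      intro i hi hle t ht
      have hin : i + 1 = n := le_antisymm hi hle
      -- leader case
      refine inv_aux (f := fun t => x (i+1) t - x i t) (a := 0) (b := T) (f' := fun t => vmax - v (α i * L / (N * (x (i+1) t - x i t))))
        (fun t ht => ?_) (hinit i hi) (fun t ht _ => ?_) t ht
      · have h1 := hlead t ht
        rw [← hin] at h1
        exact h1.sub (hfol i hi t ht)
      · have hρ0 : (0:ℝ) ≤ α i * L / (N * (x (i+1) t - x i t)) :=
          le_of_lt (div_pos (hc i hi) (mul_pos hNr (hgap' i hi t ht)))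
        have := hmono (self_mem_Ici) hρ0 hρ0
        simp only [hv0] at this
        linarith
    | succ d ih =>
      intro i hi hle t ht
      by_cases hcase : n ≤ i + 1 + d
      · exact ih i hi hcase t ht
      push_neg at hcase
      have hi1 : i + 1 < n := by omega
      refine inv_aux (f := fun t => x (i+1) t - x i t) (a := 0) (b := T) (f' := fun t =>
          v (α (i+1) * L / (N * (x (i+2) t - x (i+1) t)))
            - v (α i * L / (N * (x (i+1) t - x i t))))
        (fun t ht => (hfol (i+1) hi1 t ht).sub (hfol i hi t ht))
        (hinit i hi) (fun t ht hfle => ?_) t ht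
      -- at points where the gap i is at most the threshold
      have hρi : M ≤ α i * L / (N * (x (i+1) t - x i t)) :=
        (div_iff_aux' (hc i hi) (hgap' i hi t ht) hMpos hNr).1 hfle
      have hρi1 : α (i+1) * L / (N * (x (i+2) t - x (i+1) t)) ≤ M := by
        have hg1 := ih (i+1) hi1 (by omega) t ht
        exact (div_iff_aux (hc (i+1) hi1) (hgap' (i+1) hi1 t ht) hMpos hNr).1 hg1
      have h1 : (0:ℝ) ≤ α (i+1) * L / (N * (x (i+2) t - x (i+1) t)) :=
        le_of_lt (div_pos (hc (i+1) hi1) (mul_pos hNr (hgap' (i+1) hi1 t ht)))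
      have h2 : (0:ℝ) ≤ α i * L / (N * (x (i+1) t - x i t)) :=
        le_of_lt (div_pos (hc i hi) (mul_pos hNr (hgap' i hi t ht)))
      have := hmono (mem_Ici.2 h1) (mem_Ici.2 h2) (hρi1.trans hρi)
      linarith
  intro i hi t ht
  have h1 := key n i hi (by omega) t ht
  exact ⟨h1, (div_iff_aux (hc i hi) (hgap' i hi t ht) hMpos hNr).1 h1⟩
end

section
/- Suppose x, y : [0,T] → ℝ are differentiable, x(0) < y(0), y'(t) = v_max, and x'(t) = v(c/(y(t) − x(t))) whenever y(t) > x(t), where v is decreasing with v(0) = v_max ∈ ℝ and c > 0. Then y(t) > x(t) for all t ∈ [0,T]. -/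
/-- Two-vehicle Follow-the-Leader system: the leader is never caught
up by the follower, i.e. `x t < y t` on `[0,T]`. -/
theorem stmt5 (T vmax c : ℝ) (hT : 0 < T) (hc : 0 < c)
    (v : ℝ → ℝ) (hmono : AntitoneOn v (Set.Ici 0)) (hv0 : v 0 = vmax)
    (x y : ℝ → ℝ) (h0 : x 0 < y 0)
    (hdx : ∀ t ∈ Set.Icc 0 T, DifferentiableAt ℝ x t)
    (hdy : ∀ t ∈ Set.Icc 0 T, HasDerivAt y vmax t)
    (hode : ∀ t ∈ Set.Icc 0 T, x t < y t →
      HasDerivAt x (v (c / (y t - x t))) t) :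
    ∀ t ∈ Set.Icc 0 T, x t < y t := by
  by_contra hcon
  push_neg at hcon
  obtain ⟨t₁, ht₁, ht₁le⟩ := hcon
  set g : ℝ → ℝ := fun t => y t - x t with hg
  have hcontg : ∀ t ∈ Set.Icc 0 T, ContinuousAt g t := fun t ht =>
    ((hdy t ht).differentiableAt.sub (hdx t ht)).continuousAt
  set S : Set ℝ := Set.Icc 0 T ∩ g ⁻¹' Set.Iic 0 with hS
  have hSne : S.Nonempty := ⟨t₁, ht₁, by simpa [hg] using ht₁le⟩
  have hSbdd : BddBelow S := ⟨0, fun t ht => ht.1.1⟩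
  have hSclosed : IsClosed S := by
    apply ContinuousOn.preimage_isClosed_of_isClosed
      (fun t ht => (hcontg t ht).continuousWithinAt) isClosed_Icc isClosed_Iic
  have hmem : sInf S ∈ S := hSclosed.csInf_mem hSne hSbdd
  set t₀ : ℝ := sInf S with ht₀
  have ht₀Icc : t₀ ∈ Set.Icc 0 T := hmem.1
  have hgt₀ : g t₀ ≤ 0 := hmem.2
  have h0notS : (0 : ℝ) ∉ S := by
    intro h
    have : g 0 ≤ 0 := h.2
    simp only [hg] at this
    linarith
  have ht₀pos : 0 < t₀ := lt_of_le_of_ne ht₀Icc.1 (fun h => h0notS (h ▸ hmem))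
  -- On [0, t₀), g > 0
  have hpos : ∀ t ∈ Set.Ico (0:ℝ) t₀, x t < y t := by
    intro t ht
    by_contra h
    push_neg at h
    have htS : t ∈ S := ⟨⟨ht.1, le_trans (le_of_lt ht.2) ht₀Icc.2⟩, by simpa [hg] using h⟩
    exact absurd (csInf_le hSbdd htS) (not_le.mpr ht.2)
  -- g is monotone on [0, t₀]
  have hsub : Set.Icc (0:ℝ) t₀ ⊆ Set.Icc 0 T :=
    Set.Icc_subset_Icc le_rfl ht₀Icc.2
  have hmonog : MonotoneOn g (Set.Icc 0 t₀) := by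
    apply monotoneOn_of_deriv_nonneg (convex_Icc 0 t₀)
      (fun t ht => (hcontg t (hsub ht)).continuousWithinAt)
    · intro t ht
      rw [interior_Icc] at ht
      exact ((hdy t (hsub (Set.Ioo_subset_Icc_self ht))).differentiableAt.sub
        (hdx t (hsub (Set.Ioo_subset_Icc_self ht)))).differentiableWithinAt
    · intro t ht
      rw [interior_Icc] at ht
      have htIcc : t ∈ Set.Icc 0 T := hsub (Set.Ioo_subset_Icc_self ht)
      have hxy : x t < y t := hpos t ⟨le_of_lt ht.1, ht.2⟩
      have hd : HasDerivAt g (vmax - v (c / (y t - x t))) t :=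
        (hdy t htIcc).sub (hode t htIcc hxy)
      rw [hd.deriv]
      have hq : (0:ℝ) ≤ c / (y t - x t) := le_of_lt (div_pos hc (by linarith))
      have := hmono (Set.self_mem_Ici) hq hq
      rw [hv0] at this
      linarith
  have : g 0 ≤ g t₀ := hmonog (Set.left_mem_Icc.mpr (le_of_lt ht₀pos))
    (Set.right_mem_Icc.mpr (le_of_lt ht₀pos)) (le_of_lt ht₀pos)
  simp only [hg] at this
  linarith [h0, show y t₀ - x t₀ ≤ 0 from hgt₀]
end

section
/- Under the setting of the previous statement, suppose additionally that ρ̄ is supported in a fixed bounded interval [a,b] containing all x̄_i, and that max_i α_i = o(N) as N → ∞ (for a sequence of discretizations). Then W_{L,1}(ρ^N, ρ̄) = ∫ |R^N(x) − R(x)| dx ≤ 2(b − a)·(max_i α_i)·L/N → 0, i.e., ρ^N converges to ρ̄ in the W_{L,1} distance. -/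
open MeasureTheory Filter Topology intervalIntegral

lemma stmt15_indIic (u v x c : ℝ) (huv : u ≤ v) :
    ∫ y in Set.Iic x, (Set.Ico u v).indicator (fun _ => c) y
      = c * (min v x - min u x) := by
  rw [MeasureTheory.setIntegral_indicator measurableSet_Ico, setIntegral_const]
  rcases le_or_gt v x with h | h
  · have hs : Set.Iic x ∩ Set.Ico u v = Set.Ico u v :=
      Set.inter_eq_right.2 (fun y hy => le_trans hy.2.le h)
    rw [hs, Measure.real, Real.volume_Ico, ENNReal.toReal_ofReal (by linarith), min_eq_left h,
      min_eq_left (le_trans huv h)]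
    rw [smul_eq_mul]; ring
  · rcases le_or_gt u x with h2 | h2
    · have hs : Set.Iic x ∩ Set.Ico u v = Set.Icc u x := by
        ext y
        simp only [Set.mem_inter_iff, Set.mem_Ico, Set.mem_Iic, Set.mem_Icc]
        constructor
        · rintro ⟨h3, h1, _⟩; exact ⟨h1, h3⟩
        · rintro ⟨h1, h3⟩; exact ⟨h3, h1, lt_of_le_of_lt h3 h⟩
      rw [hs, Measure.real, Real.volume_Icc, ENNReal.toReal_ofReal (by linarith),
        min_eq_right h.le, min_eq_left h2]
      rw [smul_eq_mul]; ring
    · have hs : Set.Iic x ∩ Set.Ico u v = ∅ := by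
        ext y
        simp only [Set.mem_inter_iff, Set.mem_Ico, Set.mem_Iic, Set.mem_empty_iff_false,
          iff_false, not_and]
        rintro h3 h1 _; linarith
      rw [hs, Measure.real, measure_empty, min_eq_right h.le, min_eq_right (le_of_lt h2)]
      simp

lemma stmt15_exists_cell (f : ℕ → ℝ) :
    ∀ m, 0 < m → ∀ x, f 0 ≤ x → x ≤ f m → ∃ i < m, f i ≤ x ∧ x ≤ f (i + 1) := by
  intro m
  induction m with
  | zero => intro h; omega
  | succ m ih =>
    intro _ x h0 hm1
    rcases le_or_gt x (f m) with h | h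
    · rcases Nat.eq_zero_or_pos m with rfl | hm
      · exact ⟨0, by omega, h0, hm1⟩
      · obtain ⟨i, hi, h1, h2⟩ := ih hm x h0 h
        exact ⟨i, by omega, h1, h2⟩
    · exact ⟨m, by omega, h.le, hm1⟩

lemma stmt15_xmono (f : ℕ → ℝ) (m : ℕ) (hord : ∀ i < m, f i < f (i + 1)) :
    ∀ i j, i ≤ j → j ≤ m → f i ≤ f j := by
  intro i j hij
  induction j with
  | zero => intro _; obtain rfl : i = 0 := Nat.le_zero.mp hij; exact le_rfl
  | succ j ih =>
    intro hjm
    rcases Nat.eq_or_lt_of_le hij with rfl | hlt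
    · exact le_rfl
    · exact le_trans (ih (by omega) (by omega)) (hord j (by omega)).le

/-- Proposition 1: For a sequence of discretizations with
`max α = o(N)` and `ρ̄` supported in a fixed bounded interval `[a,b]`
containing all probe positions, the Wasserstein-type distance
`W_{L,1}(ρ^N, ρ̄) = ∫ |R^N − R|` is bounded by `2(b−a)(max α)L/N` and tends
to `0`, i.e. `ρ^N → ρ̄` in the `W_{L,1}` distance. -/
theorem stmt15 (L a b : ℝ) (hL : 0 < L) (hab : a < b)
    (ρbar : ℝ → ℝ) (hρint : Integrable ρbar) (hρpos : ∀ x, 0 ≤ ρbar x)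
    (hmass : (∫ x, ρbar x) = L)
    (hsupp : ∀ x, x ∉ Set.Icc a b → ρbar x = 0)
    -- sequence of discretizations indexed by k
    (N : ℕ → ℕ) (hN : ∀ k, 0 < N k) (hNtop : Tendsto (fun k => (N k : ℝ)) atTop atTop)
    (n : ℕ → ℕ) (hn : ∀ k, 0 < n k)
    (xbar : ℕ → ℕ → ℝ) (α : ℕ → ℕ → ℝ) (A : ℕ → ℝ)
    (hord : ∀ k, ∀ i < n k, xbar k i < xbar k (i + 1))
    (hin : ∀ k, ∀ i ≤ n k, xbar k i ∈ Set.Icc a b)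
    (hα : ∀ k, ∀ i < n k, 0 < α k i)
    (hsum : ∀ k, (∑ i ∈ Finset.range (n k), α k i) = N k)
    (hcell : ∀ k, ∀ i < n k,
      (∫ y in (xbar k i)..(xbar k (i + 1)), ρbar y) = α k i * L / N k)
    (hA : ∀ k, IsGreatest {r : ℝ | ∃ i < n k, r = α k i} (A k))
    (hsmall : Tendsto (fun k => A k / N k) atTop (𝓝 0))
    (ρN : ℕ → ℝ → ℝ)
    (hρN : ∀ k x, ρN k x = ∑ i ∈ Finset.range (n k),
      (α k i * L / (N k * (xbar k (i + 1) - xbar k i))) *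
        Set.indicator (Set.Ico (xbar k i) (xbar k (i + 1))) (fun _ => (1 : ℝ)) x)
    (R : ℝ → ℝ) (RN : ℕ → ℝ → ℝ)
    (hR : ∀ x, R x = ∫ y in Set.Iic x, ρbar y)
    (hRN : ∀ k x, RN k x = ∫ y in Set.Iic x, ρN k y) :
    (∀ k, (∫ x, |RN k x - R x|) ≤ 2 * (b - a) * A k * L / N k) ∧
    Tendsto (fun k => ∫ x, |RN k x - R x|) atTop (𝓝 0) := by
  have hbound : ∀ k, (∫ x, |RN k x - R x|) ≤ 2 * (b - a) * A k * L / N k := by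
    intro k
    have hNk : (0:ℝ) < N k := by exact_mod_cast hN k
    set c : ℕ → ℝ := fun i => α k i * L / (N k * (xbar k (i + 1) - xbar k i)) with hc
    have hXm : ∀ i j, i ≤ j → j ≤ n k → xbar k i ≤ xbar k j :=
      stmt15_xmono _ (n k) (hord k)
    have hΔ : ∀ i < n k, (0:ℝ) < xbar k (i + 1) - xbar k i :=
      fun i hi => sub_pos.2 (hord k i hi)
    have hcpos : ∀ i < n k, 0 < c i := fun i hi =>
      div_pos (mul_pos (hα k i hi) hL) (mul_pos hNk (hΔ i hi))
    have hρN' : ρN k = fun x => ∑ i ∈ Finset.range (n k),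
        (Set.Ico (xbar k i) (xbar k (i + 1))).indicator (fun _ => c i) x := by
      funext x
      rw [hρN k x]
      refine Finset.sum_congr rfl fun i _ => ?_
      by_cases hx : x ∈ Set.Ico (xbar k i) (xbar k (i + 1)) <;>
        simp [Set.indicator_of_mem, Set.indicator_of_notMem, hx, hc]
    have htermint : ∀ i, Integrable
        ((Set.Ico (xbar k i) (xbar k (i + 1))).indicator (fun _ => c i)) := by
      intro i
      rw [integrable_indicator_iff measurableSet_Ico]
      exact integrableOn_const measure_Ico_lt_top.ne
    have hρNint : Integrable (ρN k) := by
      rw [hρN']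
      exact integrable_finset_sum _ fun i _ => htermint i
    have hρNnn : ∀ x, 0 ≤ ρN k x := by
      intro x
      simp only [hρN']
      exact Finset.sum_nonneg fun i hi =>
        Set.indicator_nonneg (fun _ _ => (hcpos i (Finset.mem_range.1 hi)).le) x
    have hRNx : ∀ x, RN k x = ∑ i ∈ Finset.range (n k),
        c i * (min (xbar k (i + 1)) x - min (xbar k i) x) := by
      intro x
      rw [hRN k x]
      simp only [hρN']
      rw [integral_finset_sum _ fun i _ => (htermint i).integrableOn]
      exact Finset.sum_congr rfl fun i hi =>
        stmt15_indIic _ _ _ _ (hord k i (Finset.mem_range.1 hi)).le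
    have hcΔ : ∀ i < n k, c i * (xbar k (i + 1) - xbar k i) = α k i * L / N k := by
      intro i hi
      rw [hc]
      have h1 : xbar k (i + 1) - xbar k i ≠ 0 := (hΔ i hi).ne'
      field_simp
    have hRNval : ∀ j ≤ n k, RN k (xbar k j)
        = (∑ i ∈ Finset.range j, α k i) * L / N k := by
      intro j hj
      rw [hRNx]
      have hz : ∀ i ∈ Finset.range (n k), i ∉ Finset.range j →
          c i * (min (xbar k (i + 1)) (xbar k j) - min (xbar k i) (xbar k j)) = 0 := by
        intro i hi hij
        have hi' := Finset.mem_range.1 hi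
        have hji : j ≤ i := by simpa using hij
        have h1 : xbar k j ≤ xbar k i := hXm j i hji hi'.le
        have h2 : xbar k j ≤ xbar k (i + 1) := le_trans h1 (hord k i hi').le
        rw [min_eq_right h2, min_eq_right h1, sub_self, mul_zero]
      rw [← Finset.sum_subset (Finset.range_subset_range.2 hj) hz, Finset.sum_mul,
        Finset.sum_div]
      refine Finset.sum_congr rfl fun i hi => ?_
      have hi' : i < j := Finset.mem_range.1 hi
      have him : i < n k := lt_of_lt_of_le hi' hj
      have h1 : xbar k (i + 1) ≤ xbar k j := hXm (i + 1) j hi' hj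
      have h2 : xbar k i ≤ xbar k j := hXm i j hi'.le hj
      rw [min_eq_left h1, min_eq_left h2, hcΔ i him]
    have hLval : (∑ i ∈ Finset.range (n k), α k i) * L / N k = L := by
      rw [hsum k]
      field_simp
    have hRNhigh : ∀ x, xbar k (n k) ≤ x → RN k x = L := by
      intro x hx
      rw [hRNx, ← hLval, Finset.sum_mul, Finset.sum_div]
      refine Finset.sum_congr rfl fun i hi => ?_
      have hi' := Finset.mem_range.1 hi
      have h1 : xbar k (i + 1) ≤ x := le_trans (hXm (i + 1) (n k) hi' le_rfl) hx
      have h2 : xbar k i ≤ x := le_trans (hXm i (n k) hi'.le le_rfl) hx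
      rw [min_eq_left h1, min_eq_left h2, hcΔ i hi']
    have hII : ∀ (p q : ℝ), IntervalIntegrable ρbar volume p q :=
      fun p q => hρint.intervalIntegrable
    have hIoc : ∀ j ≤ n k, (∫ x in (xbar k 0)..(xbar k j), ρbar x)
        = (∑ i ∈ Finset.range j, α k i) * L / N k := by
      intro j hj
      rw [← intervalIntegral.sum_integral_adjacent_intervals (fun i _ => hII _ _),
        Finset.sum_mul, Finset.sum_div]
      exact Finset.sum_congr rfl fun i hi =>
        hcell k i (lt_of_lt_of_le (Finset.mem_range.1 hi) hj)
    have hR0 : R (xbar k 0) = 0 := by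
      have htot : (∫ x in Set.Ioc (xbar k 0) (xbar k (n k)), ρbar x) = L := by
        rw [← intervalIntegral.integral_of_le (hXm 0 (n k) (Nat.zero_le _) le_rfl),
          hIoc (n k) le_rfl, hsum k]
        field_simp
      have hunion : (∫ x in Set.Iic (xbar k 0), ρbar x)
          + (∫ x in Set.Ioc (xbar k 0) (xbar k (n k)), ρbar x) ≤ L := by
        rw [← MeasureTheory.setIntegral_union (Set.Iic_disjoint_Ioc le_rfl)
          measurableSet_Ioc hρint.integrableOn hρint.integrableOn, ← hmass]
        exact setIntegral_le_integral hρint (ae_of_all _ hρpos)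
      have hnn : 0 ≤ ∫ x in Set.Iic (xbar k 0), ρbar x :=
        setIntegral_nonneg measurableSet_Iic fun x _ => hρpos x
      rw [hR]
      linarith
    have hRval : ∀ j ≤ n k, R (xbar k j)
        = (∑ i ∈ Finset.range j, α k i) * L / N k := by
      intro j hj
      have h0j : xbar k 0 ≤ xbar k j := hXm 0 j (Nat.zero_le _) hj
      rw [hR, ← Set.Iic_union_Ioc_eq_Iic h0j,
        MeasureTheory.setIntegral_union (Set.Iic_disjoint_Ioc le_rfl)
          measurableSet_Ioc hρint.integrableOn hρint.integrableOn,
        ← hR, hR0, ← intervalIntegral.integral_of_le h0j, hIoc j hj, zero_add]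
    have hRmono : ∀ ⦃x y : ℝ⦄, x ≤ y → R x ≤ R y := by
      intro x y hxy
      rw [hR, hR]
      exact setIntegral_mono_set hρint.integrableOn (ae_of_all _ hρpos)
        (HasSubset.Subset.eventuallyLE (Set.Iic_subset_Iic.2 hxy))
    have hRNmono : ∀ ⦃x y : ℝ⦄, x ≤ y → RN k x ≤ RN k y := by
      intro x y hxy
      rw [hRN, hRN]
      exact setIntegral_mono_set hρNint.integrableOn (ae_of_all _ hρNnn)
        (HasSubset.Subset.eventuallyLE (Set.Iic_subset_Iic.2 hxy))
    have hRnn : ∀ x, 0 ≤ R x := by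
      intro x
      rw [hR]
      exact setIntegral_nonneg measurableSet_Iic fun y _ => hρpos y
    have hRNnn : ∀ x, 0 ≤ RN k x := by
      intro x
      rw [hRN]
      exact setIntegral_nonneg measurableSet_Iic fun y _ => hρNnn y
    have hRle : ∀ x, R x ≤ L := by
      intro x
      rw [hR, ← hmass]
      exact setIntegral_le_integral hρint (ae_of_all _ hρpos)
    have hRlow : ∀ x, x ≤ xbar k 0 → R x = 0 := by
      intro x hx
      have h1 : R x ≤ R (xbar k 0) := hRmono hx
      rw [hR0] at h1
      linarith [hRnn x]
    have hRNlow : ∀ x, x ≤ xbar k 0 → RN k x = 0 := by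
      intro x hx
      have h1 : RN k x ≤ RN k (xbar k 0) := hRNmono hx
      rw [hRNval 0 (Nat.zero_le _)] at h1
      simp only [Finset.range_zero, Finset.sum_empty, zero_mul, zero_div] at h1
      linarith [hRNnn x]
    have hRhigh : ∀ x, xbar k (n k) ≤ x → R x = L := by
      intro x hx
      have h1 : R (xbar k (n k)) ≤ R x := hRmono hx
      rw [hRval (n k) le_rfl, hLval] at h1
      linarith [hRle x]
    obtain ⟨⟨i0, hi0, hAi0⟩, hAub⟩ := hA k
    have hApos : 0 < A k := hAi0 ▸ hα k i0 hi0
    have hCnn : 0 ≤ A k * L / N k := by positivity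
    have hpt : ∀ x, |RN k x - R x|
        ≤ (Set.Icc (xbar k 0) (xbar k (n k))).indicator (fun _ => A k * L / N k) x := by
      intro x
      by_cases hx : x ∈ Set.Icc (xbar k 0) (xbar k (n k))
      · rw [Set.indicator_of_mem hx]
        obtain ⟨i, him, h1, h2⟩ := stmt15_exists_cell (xbar k) (n k) (hn k) x hx.1 hx.2
        have e1 := hRval i him.le
        have e2 := hRval (i + 1) him
        have e1' := hRNval i him.le
        have e2' := hRNval (i + 1) him
        have b1 : R (xbar k i) ≤ R x := hRmono h1
        have b2 : R x ≤ R (xbar k (i + 1)) := hRmono h2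
        have b3 : RN k (xbar k i) ≤ RN k x := hRNmono h1
        have b4 : RN k x ≤ RN k (xbar k (i + 1)) := hRNmono h2
        have hdiff : (∑ j ∈ Finset.range (i + 1), α k j) * L / N k
            - (∑ j ∈ Finset.range i, α k j) * L / N k = α k i * L / N k := by
          rw [Finset.sum_range_succ]
          ring
        have hαA : α k i ≤ A k := hAub ⟨i, him, rfl⟩
        have hCb : α k i * L / N k ≤ A k * L / N k := by gcongr
        rw [abs_le]
        constructor <;> [linarith; linarith]
      · rw [Set.indicator_of_notMem hx]
        simp only [Set.mem_Icc, not_and_or, not_le] at hx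
        rcases hx with hx | hx
        · rw [hRlow x hx.le, hRNlow x hx.le, sub_self, abs_zero]
        · rw [hRhigh x hx.le, hRNhigh x hx.le, sub_self, abs_zero]
    have hgint : Integrable
        ((Set.Icc (xbar k 0) (xbar k (n k))).indicator (fun _ => A k * L / N k)) := by
      rw [integrable_indicator_iff measurableSet_Icc]
      exact integrableOn_const measure_Icc_lt_top.ne
    have hint1 : (∫ x, |RN k x - R x|)
        ≤ ∫ x, (Set.Icc (xbar k 0) (xbar k (n k))).indicator (fun _ => A k * L / N k) x :=
      integral_mono_of_nonneg (ae_of_all _ fun x => abs_nonneg _) hgint (ae_of_all _ hpt)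
    have hval : (∫ x, (Set.Icc (xbar k 0) (xbar k (n k))).indicator
        (fun _ => A k * L / N k) x) = (xbar k (n k) - xbar k 0) * (A k * L / N k) := by
      rw [integral_indicator_const _ measurableSet_Icc, Measure.real, Real.volume_Icc, smul_eq_mul,
        ENNReal.toReal_ofReal (sub_nonneg.2 (hXm 0 (n k) (Nat.zero_le _) le_rfl))]
    have hlen : xbar k (n k) - xbar k 0 ≤ b - a := by
      have h1 := hin k (n k) le_rfl
      have h2 := hin k 0 (Nat.zero_le _)
      simp only [Set.mem_Icc] at h1 h2
      linarith
    have hstep : (xbar k (n k) - xbar k 0) * (A k * L / N k)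
        ≤ (b - a) * (A k * L / N k) := mul_le_mul_of_nonneg_right hlen hCnn
    have hfin : (b - a) * (A k * L / N k) ≤ 2 * (b - a) * A k * L / N k := by
      have h0 : 0 ≤ (b - a) * (A k * L / N k) :=
        mul_nonneg (by linarith) hCnn
      have h2 : 2 * (b - a) * A k * L / N k = 2 * ((b - a) * (A k * L / N k)) := by
        ring
      linarith
    calc (∫ x, |RN k x - R x|) ≤ _ := hint1
      _ = (xbar k (n k) - xbar k 0) * (A k * L / N k) := hval
      _ ≤ (b - a) * (A k * L / N k) := hstep
      _ ≤ 2 * (b - a) * A k * L / N k := hfin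
  refine ⟨hbound, ?_⟩
  have hnn : ∀ k, 0 ≤ ∫ x, |RN k x - R x| := fun k => integral_nonneg fun x => abs_nonneg _
  have hb : Tendsto (fun k => 2 * (b - a) * A k * L / N k) atTop (𝓝 0) := by
    have heq : (fun k => 2 * (b - a) * A k * L / N k)
        = fun k => (2 * (b - a) * L) * (A k / N k) := by
      funext k
      ring
    rw [heq]
    simpa using hsmall.const_mul (2 * (b - a) * L)
  exact squeeze_zero hnn hbound hb
end
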